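/- (Zero-force surface.) Let a,b > 1 and c > 0 be reals satisfying ab − a − b − c² + 1 = 0. Then for every integer w ≥ 3, the free energy is independent of the width: κ_w(a,b,c) = (1/2)·( log a + log(a + c² − 1) − log(a − 1) ). In particular the force F_w(a,b,c) = κ_{w+1}(a,b,c) − κ_w(a,b,c) vanishes on this surface. -/

import Mathlib

open Filter
open scoped Classical

noncomputable section

/-- Step value of a Boolean step: `true` is an up step (+1), `false` a down step (−1). -/
def stepVal (x : Bool) : ℤ := if x then 1 else -1

/-- Height of the walk after `k` steps. -/
def ht (σ : ℕ → Bool) (k : ℕ) : ℤ := ∑ i ∈ Finset.range k, stepVal (σ i)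

/-- Extend a finite sequence of steps to `ℕ → Bool`. -/
def extFun {n : ℕ} (σ : Fin n → Bool) : ℕ → Bool :=
  fun i => if h : i < n then σ ⟨i, h⟩ else false

/-- The first `n` steps of `σ` stay in the strip `0 ≤ y ≤ w`. -/
def IsWalk (w n : ℕ) (σ : ℕ → Bool) : Prop :=
  ∀ k ≤ n, 0 ≤ ht σ k ∧ ht σ k ≤ (w : ℤ)

/-- Number of contacts with the bottom wall (excluding the origin):
`m_a(φ) = #{1 ≤ k ≤ n : h_k = 0}`. -/
def ma (n : ℕ) (σ : ℕ → Bool) : ℕ :=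
  ((Finset.Icc 1 n).filter (fun k => ht σ k = 0)).card

/-- Number of contacts with the top wall: `m_b(φ) = #{1 ≤ k ≤ n : h_k = w}`. -/
def mb (w n : ℕ) (σ : ℕ → Bool) : ℕ :=
  ((Finset.Icc 1 n).filter (fun k => ht σ k = (w : ℤ))).card

/-- Number of stiffness points: `m_c(φ) = #{1 ≤ k ≤ n−1 : σ_k = σ_{k+1}}`. -/
def mc (n : ℕ) (σ : ℕ → Bool) : ℕ :=
  ((Finset.range (n - 1)).filter (fun i => σ i = σ (i + 1))).card

/-- Boltzmann weight of a walk: `W(φ) = a^{m_a} b^{m_b} c^{m_c}`. -/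
def wt (w n : ℕ) (a b c : ℝ) (σ : ℕ → Bool) : ℝ :=
  a ^ ma n σ * b ^ mb w n σ * c ^ mc n σ

/-- Partition function `Z_{w,n}(a,b,c)`: sum of weights over all walks of length `n`
in the strip of width `w`. -/
def Z (w n : ℕ) (a b c : ℝ) : ℝ :=
  ∑ σ ∈ Finset.univ.filter (fun σ : Fin n → Bool => IsWalk w n (extFun σ)),
    wt w n a b c (extFun σ)

/-- Fixed-endpoint partition function `Z_{w,n,h}(a,b,c)`: sum over walks of length `n`
in the strip of width `w` ending at height `h`. -/
def Zh (w n h : ℕ) (a b c : ℝ) : ℝ :=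
  ∑ σ ∈ Finset.univ.filter
      (fun σ : Fin n → Bool => IsWalk w n (extFun σ) ∧ ht (extFun σ) n = (h : ℤ)),
    wt w n a b c (extFun σ)

end

/-!
On the surface `(a - 1) (b - 1) = c²`, the transfer operator of the strip, acting on the states
(height, direction of the last step), has an explicit positive eigenvector with eigenvalue
`√(ab)`, which does not depend on the width: away from the walls it is geometric in the height
with ratio `x = √(ab) (b - 1) / (b c)`, and at the walls it is this bulk solution divided by the
wall weight.
Weighting each walk by the eigenvector at its final state therefore gives exactly
`√(ab) ^ n` times a constant, and as the eigenvector is bounded above and below on the finitely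
many states, `Z_{w,n}` lies within constant factors of `√(ab) ^ n`. So `κ_w = log √(ab)`, which
is the stated formula because `a + c² - 1 = b (a - 1)` on the surface.
-/

-- Proved by `if_pos`, not `rfl`, so that `simp` also transports the `Decidable` instances of the
-- `ite`s whose conditions it rewrites with it.
@[simp] lemma stepVal_true : stepVal true = 1 := if_pos rfl

@[simp] lemma stepVal_false : stepVal false = -1 := if_neg Bool.false_ne_true

section Snoc

variable {n : ℕ} (τ : Fin n → Bool) (d : Bool)

lemma ht_succ (σ : ℕ → Bool) (k : ℕ) : ht σ (k + 1) = ht σ k + stepVal (σ k) :=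
  Finset.sum_range_succ _ _

lemma ht_congr {σ σ' : ℕ → Bool} {k : ℕ} (h : ∀ i < k, σ i = σ' i) : ht σ k = ht σ' k :=
  Finset.sum_congr rfl fun i hi => by rw [h i (Finset.mem_range.1 hi)]

lemma extFun_snoc_of_lt {i : ℕ} (hi : i < n) : extFun (Fin.snoc τ d) i = extFun τ i := by
  simp only [extFun, dif_pos hi, dif_pos (Nat.lt_succ_of_lt hi)]
  exact Fin.snoc_castSucc (i := ⟨i, hi⟩) ..

lemma extFun_snoc_self : extFun (Fin.snoc τ d) n = d := by
  simp only [extFun, dif_pos (Nat.lt_succ_self n)]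
  exact Fin.snoc_last (α := fun _ => Bool) ..

lemma ht_snoc_of_le {k : ℕ} (hk : k ≤ n) : ht (extFun (Fin.snoc τ d)) k = ht (extFun τ) k :=
  ht_congr fun _ hi => extFun_snoc_of_lt τ d (hi.trans_le hk)

lemma ht_snoc_succ : ht (extFun (Fin.snoc τ d)) (n + 1) = ht (extFun τ) n + stepVal d := by
  rw [ht_succ, ht_snoc_of_le τ d le_rfl, extFun_snoc_self]

lemma isWalk_snoc_iff {w : ℕ} :
    IsWalk w (n + 1) (extFun (Fin.snoc τ d)) ↔ IsWalk w n (extFun τ) ∧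
      0 ≤ ht (extFun τ) n + stepVal d ∧ ht (extFun τ) n + stepVal d ≤ w := by
  constructor
  · intro H
    refine ⟨fun k hk => ?_, ?_⟩
    · simpa only [ht_snoc_of_le τ d hk] using H k (hk.trans n.le_succ)
    · simpa only [ht_snoc_succ] using H (n + 1) le_rfl
  · rintro ⟨H, hlast⟩ k hk
    rcases hk.lt_or_eq with hk | rfl
    · rw [ht_snoc_of_le τ d (Nat.lt_succ_iff.1 hk)]
      exact H k (Nat.lt_succ_iff.1 hk)
    · rwa [ht_snoc_succ]

lemma card_filter_ht_snoc (P : ℤ → Prop) [DecidablePred P] :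
    ((Finset.Icc 1 (n + 1)).filter fun k => P (ht (extFun (Fin.snoc τ d)) k)).card =
      ((Finset.Icc 1 n).filter fun k => P (ht (extFun τ) k)).card +
        if P (ht (extFun τ) n + stepVal d) then 1 else 0 := by
  rw [← Finset.insert_Icc_right_eq_Icc_add_one (Nat.le_add_left 1 n), Finset.filter_insert,
    ht_snoc_succ, Finset.filter_congr fun k hk => by rw [ht_snoc_of_le τ d (Finset.mem_Icc.1 hk).2]]
  split_ifs
  · rw [Finset.card_insert_of_notMem (by simp)]
  · rfl

lemma ma_snoc : ma (n + 1) (extFun (Fin.snoc τ d)) =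
    ma n (extFun τ) + if ht (extFun τ) n + stepVal d = 0 then 1 else 0 :=
  card_filter_ht_snoc τ d (· = 0)

lemma mb_snoc {w : ℕ} : mb w (n + 1) (extFun (Fin.snoc τ d)) =
    mb w n (extFun τ) + if ht (extFun τ) n + stepVal d = w then 1 else 0 :=
  card_filter_ht_snoc τ d (· = (w : ℤ))

/-- The direction of the last step, with the convention that the empty walk "arrived" by a down
step, so that its first (necessarily up) step is not a stiffness point. -/
def lastStep (n : ℕ) (σ : ℕ → Bool) : Bool := if n = 0 then false else σ (n - 1)

lemma lastStep_snoc : lastStep (n + 1) (extFun (Fin.snoc τ d)) = d := by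
  simp only [lastStep, Nat.add_sub_cancel, if_neg n.succ_ne_zero, extFun_snoc_self]

lemma mc_snoc (hn : n ≠ 0) : mc (n + 1) (extFun (Fin.snoc τ d)) =
    mc n (extFun τ) + if lastStep n (extFun τ) = d then 1 else 0 := by
  obtain ⟨m, rfl⟩ : ∃ m, n = m + 1 := Nat.exists_eq_add_one.2 (Nat.pos_of_ne_zero hn)
  have hfilter : ((Finset.range m).filter fun i =>
      extFun (Fin.snoc τ d) i = extFun (Fin.snoc τ d) (i + 1)) =
      (Finset.range m).filter fun i => extFun τ i = extFun τ (i + 1) :=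
    Finset.filter_congr fun i hi => by
      have hi : i < m := Finset.mem_range.1 hi
      rw [extFun_snoc_of_lt τ d (by omega), extFun_snoc_of_lt τ d (by omega)]
  simp only [mc, lastStep, Nat.add_sub_cancel, Finset.range_add_one, Finset.filter_insert,
    extFun_snoc_of_lt τ d m.lt_succ_self, extFun_snoc_self, hfilter, if_neg m.succ_ne_zero]
  split_ifs
  · rw [Finset.card_insert_of_notMem (by simp)]
  · rfl

end Snoc

lemma Fintype.sum_eq_sum_snoc {α M : Type*} [Fintype α] [AddCommMonoid M] {n : ℕ}
    (g : (Fin (n + 1) → α) → M) : ∑ σ, g σ = ∑ τ : Fin n → α, ∑ d, g (Fin.snoc τ d) := by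
  rw [← (Fin.snocEquiv fun _ => α).sum_comp, Fintype.sum_prod_type_right]
  rfl

noncomputable section Transfer

variable (a b c : ℝ) (w : ℕ)

def wallWeight (h : ℤ) : ℝ := (if h = 0 then a else 1) * (if h = w then b else 1)

def stiffWeight (d d' : Bool) : ℝ := if d = d' then c else 1

lemma wt_snoc {n : ℕ} (τ : Fin n → Bool) (d : Bool) (hd : n = 0 → d = true) :
    wt w (n + 1) a b c (extFun (Fin.snoc τ d)) =
      wt w n a b c (extFun τ) * wallWeight a b w (ht (extFun τ) n + stepVal d) *
        stiffWeight c (lastStep n (extFun τ)) d := by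
  rcases eq_or_ne n 0 with rfl | hn
  · obtain rfl := hd rfl
    have hmc : mc (0 + 1) (extFun (Fin.snoc τ true)) = mc 0 (extFun τ) := by simp [mc]
    have hstiff : stiffWeight c (lastStep 0 (extFun τ)) true = 1 := rfl
    simp only [wt, wallWeight, ma_snoc, mb_snoc, hmc, hstiff, pow_add, pow_ite, pow_one, pow_zero]
    split_ifs <;> ring
  · simp only [wt, wallWeight, stiffWeight, ma_snoc, mb_snoc, mc_snoc τ d hn, pow_add, pow_ite,
      pow_one, pow_zero]
    split_ifs <;> ring

def transfer (f : ℤ → Bool → ℝ) (h : ℤ) (d₀ : Bool) : ℝ :=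
  ∑ d : Bool, if 0 ≤ h + stepVal d ∧ h + stepVal d ≤ w then
    wallWeight a b w (h + stepVal d) * stiffWeight c d₀ d * f (h + stepVal d) d else 0

def weightedZ (n : ℕ) (f : ℤ → Bool → ℝ) : ℝ :=
  ∑ σ ∈ Finset.univ.filter (fun σ : Fin n → Bool => IsWalk w n (extFun σ)),
    wt w n a b c (extFun σ) * f (ht (extFun σ) n) (lastStep n (extFun σ))

lemma weightedZ_zero (f : ℤ → Bool → ℝ) : weightedZ a b c w 0 f = f 0 false := by
  have hwalk (σ : Fin 0 → Bool) : IsWalk w 0 (extFun σ) := fun k hk => by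
    simp [Nat.le_zero.1 hk, ht]
  simp [weightedZ, Finset.filter_true_of_mem fun σ _ => hwalk σ, wt, ma, mb, mc, ht, lastStep]

lemma weightedZ_congr {n : ℕ} {f g : ℤ → Bool → ℝ}
    (hfg : ∀ h : ℤ, 0 ≤ h → h ≤ w → ∀ d, f h d = g h d) :
    weightedZ a b c w n f = weightedZ a b c w n g :=
  Finset.sum_congr rfl fun σ hσ => by
    obtain ⟨h0, hw⟩ := (Finset.mem_filter.1 hσ).2 n le_rfl
    rw [hfg _ h0 hw]

lemma ite_walk_snoc {n : ℕ} (f : ℤ → Bool → ℝ) (τ : Fin n → Bool) (d : Bool) :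
    (if IsWalk w (n + 1) (extFun (Fin.snoc τ d)) then
      wt w (n + 1) a b c (extFun (Fin.snoc τ d)) *
        f (ht (extFun (Fin.snoc τ d)) (n + 1)) (lastStep (n + 1) (extFun (Fin.snoc τ d)))
      else 0) =
    if IsWalk w n (extFun τ) then wt w n a b c (extFun τ) *
      (if 0 ≤ ht (extFun τ) n + stepVal d ∧ ht (extFun τ) n + stepVal d ≤ w then
        wallWeight a b w (ht (extFun τ) n + stepVal d) * stiffWeight c (lastStep n (extFun τ)) d *
          f (ht (extFun τ) n + stepVal d) d else 0)
    else 0 := by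
  by_cases hτ : IsWalk w n (extFun τ)
  · by_cases hstep : 0 ≤ ht (extFun τ) n + stepVal d ∧ ht (extFun τ) n + stepVal d ≤ w
    · have hd : n = 0 → d = true := by
        rintro rfl
        cases d
        · simp [ht, stepVal] at hstep
        · rfl
      rw [if_pos ((isWalk_snoc_iff τ d).2 ⟨hτ, hstep⟩), if_pos hτ, if_pos hstep,
        wt_snoc a b c w τ d hd, ht_snoc_succ, lastStep_snoc]
      ring
    · rw [if_neg fun h => hstep ((isWalk_snoc_iff τ d).1 h).2, if_pos hτ, if_neg hstep, mul_zero]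
  · rw [if_neg fun h => hτ ((isWalk_snoc_iff τ d).1 h).1, if_neg hτ]

lemma weightedZ_succ (n : ℕ) (f : ℤ → Bool → ℝ) :
    weightedZ a b c w (n + 1) f = weightedZ a b c w n (transfer a b c w f) := by
  simp only [weightedZ, transfer, Finset.sum_filter]
  rw [Fintype.sum_eq_sum_snoc]
  refine Finset.sum_congr rfl fun τ _ => ?_
  simp only [ite_walk_snoc]
  split_ifs <;> simp only [Finset.mul_sum, mul_ite, mul_zero, Finset.sum_const_zero]

lemma weightedZ_const_mul (n : ℕ) (μ : ℝ) (f : ℤ → Bool → ℝ) :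
    weightedZ a b c w n (fun h d => μ * f h d) = μ * weightedZ a b c w n f := by
  simp only [weightedZ, Finset.mul_sum]
  exact Finset.sum_congr rfl fun _ _ => mul_left_comm ..

lemma weightedZ_eq_pow {f : ℤ → Bool → ℝ} {μ : ℝ}
    (hf : ∀ h : ℤ, 0 ≤ h → h ≤ w → ∀ d, transfer a b c w f h d = μ * f h d) (n : ℕ) :
    weightedZ a b c w n f = μ ^ n * f 0 false := by
  induction n with
  | zero => simp [weightedZ_zero]
  | succ n ih =>
    rw [weightedZ_succ, weightedZ_congr a b c w hf, weightedZ_const_mul, ih]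
    ring

end Transfer

lemma tendsto_log_div_of_pow_bounds {u : ℕ → ℝ} {A B μ : ℝ} (hA : 0 < A) (hμ : 0 < μ)
    (hlow : ∀ n, A * μ ^ n ≤ u n) (hup : ∀ n, u n ≤ B * μ ^ n) :
    Tendsto (fun n : ℕ => Real.log (u n) / n) atTop (nhds (Real.log μ)) := by
  have hu (n : ℕ) : 0 < u n := (by positivity : 0 < A * μ ^ n).trans_le (hlow n)
  have hbdd (n : ℕ) : Real.log A ≤ Real.log (u n) - n * Real.log μ ∧
      Real.log (u n) - n * Real.log μ ≤ Real.log B := by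
    rw [← Real.log_pow, ← Real.log_div (hu n).ne' (by positivity)]
    exact ⟨Real.log_le_log hA ((le_div_iff₀ (by positivity)).2 (hlow n)),
      Real.log_le_log (by have := hu n; positivity) ((div_le_iff₀ (by positivity)).2 (hup n))⟩
  have hzero := tendsto_bdd_div_atTop_nhds_zero (Eventually.of_forall fun n => (hbdd n).1)
    (Eventually.of_forall fun n => (hbdd n).2) tendsto_natCast_atTop_atTop
  refine ((hzero.add_const (Real.log μ)).congr' ?_).trans (by rw [zero_add])
  filter_upwards [eventually_ne_atTop 0] with n hn
  field_simp
  ring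

section FreeEnergy

variable {a b c : ℝ} {w : ℕ}

lemma wt_nonneg (ha : 0 ≤ a) (hb : 0 ≤ b) (hc : 0 ≤ c) (n : ℕ) (σ : ℕ → Bool) :
    0 ≤ wt w n a b c σ := by
  unfold wt
  positivity

lemma exists_pos_bounds_on_strip {f : ℤ → Bool → ℝ}
    (hpos : ∀ h : ℤ, 0 ≤ h → h ≤ w → ∀ d, 0 < f h d) :
    ∃ m M, 0 < m ∧ ∀ h : ℤ, 0 ≤ h → h ≤ w → ∀ d, m ≤ f h d ∧ f h d ≤ M := by
  let S := Finset.Icc (0 : ℤ) w ×ˢ (Finset.univ : Finset Bool)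
  have hS : ((0 : ℤ), false) ∈ S := by simp [S]
  obtain ⟨pmin, hpmin, hmin⟩ := S.exists_min_image (fun p => f p.1 p.2) ⟨_, hS⟩
  obtain ⟨pmax, -, hmax⟩ := S.exists_max_image (fun p => f p.1 p.2) ⟨_, hS⟩
  have hmemS {h : ℤ} (h0 : 0 ≤ h) (hw : h ≤ w) (d : Bool) : (h, d) ∈ S := by simp [S, h0, hw]
  simp only [S, Finset.mem_product, Finset.mem_Icc] at hpmin
  exact ⟨_, _, hpos _ hpmin.1.1 hpmin.1.2 _, fun h h0 hw d =>
    ⟨hmin _ (hmemS h0 hw d), hmax _ (hmemS h0 hw d)⟩⟩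

theorem tendsto_log_Z_div_of_eigen (ha : 0 ≤ a) (hb : 0 ≤ b) (hc : 0 ≤ c)
    {f : ℤ → Bool → ℝ} {μ : ℝ} (hμ : 0 < μ)
    (hpos : ∀ h : ℤ, 0 ≤ h → h ≤ w → ∀ d, 0 < f h d)
    (heig : ∀ h : ℤ, 0 ≤ h → h ≤ w → ∀ d, transfer a b c w f h d = μ * f h d) :
    Tendsto (fun n : ℕ => Real.log (Z w n a b c) / n) atTop (nhds (Real.log μ)) := by
  obtain ⟨m, M, hm, hbounds⟩ := exists_pos_bounds_on_strip hpos
  have hf₀ : 0 < f 0 false := hpos 0 le_rfl (Int.natCast_nonneg w) false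
  have hM : 0 < M := hf₀.trans_le (hbounds 0 le_rfl (Int.natCast_nonneg w) false).2
  have hsandwich (n : ℕ) :
      m * Z w n a b c ≤ μ ^ n * f 0 false ∧ μ ^ n * f 0 false ≤ M * Z w n a b c := by
    rw [← weightedZ_eq_pow a b c w heig n, Z, Finset.mul_sum, Finset.mul_sum]
    constructor <;> refine Finset.sum_le_sum fun σ hσ => ?_
    all_goals
      obtain ⟨h0, hw⟩ := (Finset.mem_filter.1 hσ).2 n le_rfl
      have hwt := wt_nonneg (w := w) ha hb hc n (extFun σ)
      obtain ⟨hlow, hhigh⟩ := hbounds _ h0 hw (lastStep n (extFun σ))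
    · rw [mul_comm m]
      exact mul_le_mul_of_nonneg_left hlow hwt
    · rw [mul_comm M]
      exact mul_le_mul_of_nonneg_left hhigh hwt
  refine tendsto_log_div_of_pow_bounds (A := f 0 false / M) (B := f 0 false / m)
    (by positivity) hμ (fun n => ?_) (fun n => ?_)
  · rw [div_mul_eq_mul_div, div_le_iff₀ hM]
    linarith [(hsandwich n).2]
  · rw [div_mul_eq_mul_div, le_div_iff₀ hm]
    linarith [(hsandwich n).1]

end FreeEnergy

noncomputable section ZeroForce

variable {a b c x L : ℝ} {w : ℕ}

def bulkVec (b x L : ℝ) (h : ℤ) (d : Bool) : ℝ := (if d then b / (x * L) else 1) * x ^ h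

/-- The positive eigenvector of the transfer operator on the zero-force surface: the bulk
solution divided by the wall weight at the walls, where the two states `(0, up)` and
`(w, down)`, which no walk reaches, get the values the eigenvalue equation forces. -/
def zeroForceVec (a b c x L : ℝ) (w : ℕ) (h : ℤ) (d : Bool) : ℝ :=
  if h = 0 then (if d then c / a else 1 / a)
  else if h = w then (if d then x ^ ((w : ℤ) - 1) / L else c * x ^ ((w : ℤ) - 1) / L)
  else bulkVec b x L h d

lemma zeroForceVec_pos (ha : 0 < a) (hb : 0 < b) (hc : 0 < c) (hx : 0 < x) (hL : 0 < L)
    (h : ℤ) (d : Bool) : 0 < zeroForceVec a b c x L w h d := by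
  unfold zeroForceVec bulkVec
  split_ifs <;> positivity

lemma wallWeight_mul_zeroForceVec (hw : 1 ≤ w) (ha : a ≠ 0) (hx : x ≠ 0) {h : ℤ} {d : Bool}
    (hbot : h = 0 → d = false) (htop : h = w → d = true) :
    wallWeight a b w h * zeroForceVec a b c x L w h d = bulkVec b x L h d := by
  unfold wallWeight zeroForceVec bulkVec
  rcases eq_or_ne h 0 with rfl | h0
  · rw [hbot rfl, if_neg (by omega : (0 : ℤ) ≠ w)]
    simp [ha]
  rcases eq_or_ne h w with rfl | hw'
  · rw [htop rfl, zpow_sub_one₀ hx]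
    simp only [if_true, if_neg h0]
    field_simp
  · simp [h0, hw']

lemma bulkVec_eigen (hx : x ≠ 0) (hL : L ≠ 0) (hup : c * b * x + L = b * L)
    (hdown : b * x + c * L = L ^ 2 * x) (h : ℤ) (d₀ : Bool) :
    stiffWeight c d₀ true * bulkVec b x L (h + 1) true +
      stiffWeight c d₀ false * bulkVec b x L (h - 1) false = L * bulkVec b x L h d₀ := by
  have hxh : x ^ h ≠ 0 := zpow_ne_zero h hx
  cases d₀ <;> simp only [stiffWeight, bulkVec, zpow_add_one₀ hx, zpow_sub_one₀ hx] <;>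
    norm_num <;> field_simp
  · linear_combination hdown
  · linear_combination hup

lemma transfer_zeroForceVec (hw : 1 ≤ w) (ha : a ≠ 0) (hx : x ≠ 0) (hL : L ≠ 0)
    (hL2 : L ^ 2 = a * b) (hup : c * b * x + L = b * L) (hdown : b * x + c * L = L ^ 2 * x)
    {h : ℤ} (h0 : 0 ≤ h) (hhw : h ≤ w) (d₀ : Bool) :
    transfer a b c w (zeroForceVec a b c x L w) h d₀ = L * zeroForceVec a b c x L w h d₀ := by
  have hstep (d : Bool) :
      (if 0 ≤ h + stepVal d ∧ h + stepVal d ≤ w then wallWeight a b w (h + stepVal d) *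
        stiffWeight c d₀ d * zeroForceVec a b c x L w (h + stepVal d) d else 0) =
      if 0 ≤ h + stepVal d ∧ h + stepVal d ≤ w then
        stiffWeight c d₀ d * bulkVec b x L (h + stepVal d) d else 0 := by
    split_ifs
    · rw [mul_right_comm, wallWeight_mul_zeroForceVec hw ha hx, mul_comm] <;>
        cases d <;> simp <;> omega
    · rfl
  have hwz : (1 : ℤ) ≤ w := by exact_mod_cast hw
  have hw0 : w ≠ 0 := by omega
  rw [transfer, Fintype.sum_bool, hstep, hstep]
  simp only [stepVal_true, stepVal_false, ← sub_eq_add_neg]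
  rcases eq_or_ne h 0 with rfl | hbot
  · rw [if_pos (by omega), if_neg (by omega), add_zero]
    cases d₀ <;> simp [stiffWeight, bulkVec, zeroForceVec] <;> field_simp
    all_goals rw [hL2]; ring
  rcases eq_or_ne h w with rfl | htop
  · rw [if_neg (by omega), if_pos (by omega), zero_add]
    cases d₀ <;> simp [stiffWeight, bulkVec, zeroForceVec, hw0] <;> field_simp
  · rw [if_pos (by omega), if_pos (by omega), bulkVec_eigen hx hL hup hdown]
    simp [zeroForceVec, hbot, htop]

lemma tendsto_log_Z_div_of_zeroForce (ha : 1 < a) (hb : 1 < b) (hc : 0 < c)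
    (hsurf : a * b - a - b - c ^ 2 + 1 = 0) (hw : 1 ≤ w) :
    Tendsto (fun n : ℕ => Real.log (Z w n a b c) / n) atTop
      (nhds (Real.log (Real.sqrt (a * b)))) := by
  set L := Real.sqrt (a * b)
  have hL : 0 < L := Real.sqrt_pos.2 (by nlinarith)
  have hL2 : L ^ 2 = a * b := Real.sq_sqrt (by nlinarith)
  set x := L * (b - 1) / (b * c)
  have hx : 0 < x := by have := sub_pos.2 hb; positivity
  have hup : c * b * x + L = b * L := by
    simp only [x]
    field_simp
    ring
  have hdown : b * x + c * L = L ^ 2 * x := by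
    simp only [x]
    field_simp
    linear_combination (-b) * hsurf - (b - 1) * hL2
  exact tendsto_log_Z_div_of_eigen (by linarith) (by linarith) hc.le hL
    (fun h _ _ d => zeroForceVec_pos (by linarith) (by linarith) hc hx hL h d)
    (fun _ h0 hhw d =>
      transfer_zeroForceVec hw (by positivity) hx.ne' hL.ne' hL2 hup hdown h0 hhw d)

lemma log_sqrt_mul_eq_of_zeroForce (ha : 1 < a) (hb : 1 < b)
    (hsurf : a * b - a - b - c ^ 2 + 1 = 0) :
    Real.log (Real.sqrt (a * b)) =
      (1 / 2) * (Real.log a + Real.log (a + c ^ 2 - 1) - Real.log (a - 1)) := by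
  have hba : a + c ^ 2 - 1 = b * (a - 1) := by linear_combination -hsurf
  rw [hba, Real.log_sqrt (by nlinarith), Real.log_mul (by positivity) (by linarith),
    Real.log_mul (by positivity) (by linarith)]
  ring

end ZeroForce

/-- on the zero-force surface `ab − a − b − c² + 1 = 0` (with `a,b > 1`),
the free energy is independent of the width, and the force vanishes. -/
theorem zero_force_surface (a b c : ℝ) (ha : 1 < a) (hb : 1 < b) (hc : 0 < c)
    (hsurf : a * b - a - b - c ^ 2 + 1 = 0) (w : ℕ) (hw : 3 ≤ w) (κ κ' : ℝ)
    (hκ : Tendsto (fun n : ℕ => Real.log (Z w n a b c) / (n : ℝ)) atTop (nhds κ))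
    (hκ' : Tendsto (fun n : ℕ => Real.log (Z (w + 1) n a b c) / (n : ℝ)) atTop (nhds κ')) :
    κ = (1 / 2) * (Real.log a + Real.log (a + c ^ 2 - 1) - Real.log (a - 1)) ∧
    κ' - κ = 0 := by
  have hκ_eq := tendsto_nhds_unique hκ (tendsto_log_Z_div_of_zeroForce ha hb hc hsurf (by omega))
  have hκ'_eq :=
    tendsto_nhds_unique hκ' (tendsto_log_Z_div_of_zeroForce ha hb hc hsurf (by omega))
  exact ⟨hκ_eq.trans (log_sqrt_mul_eq_of_zeroForce ha hb hsurf), by rw [hκ_eq, hκ'_eq, sub_self]⟩
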